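/- arXiv:2402.05057 — 4 statements merged into one kernel-verified Lean document; each statement's English description precedes it below -/
import Mathlib

section
/- Let T be an incomplete table over schema R and K ⊆ R. If the submultiset of K-total tuples of T satisfies the strongly possible key sp⟨K⟩, then there exists a minimum-cardinality submultiset U of T such that T∖U satisfies sp⟨K⟩ and every tuple of U is non-K-total (i.e., each tuple of U has ⊥ in some attribute of K). -/
/- Common framework: incomplete tables, strongly possible worlds and constraints.
   A tuple assigns each attribute a value in `Option V`, with `none` encoding the
   null marker ⊥.  In the degenerate case of an attribute whose active domain is
   empty, the fresh symbol `s` (outside all domains) is encoded by `none` in the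
   strongly possible world: it is a single fixed symbol, equal only to itself and
   different from every domain value, exactly as `none` behaves. -/

namespace SPDB

variable {α V : Type} [DecidableEq α] [DecidableEq V]

/-- A tuple over attribute type `α` with values in `V`; `none` is the null ⊥. -/
abbrev Tuple (α V : Type) := α → Option V

/-- An incomplete table: a finite multiset of tuples. -/
abbrev Table (α V : Type) := Multiset (Tuple α V)

/-- The active domain of attribute `A` in table `T`: the non-null values in column `A`. -/
def VD (T : Table α V) (A : α) : Finset V :=
  (T.filterMap fun t => t A).toFinset

/-- `t'` is a strongly possible extension of `t` w.r.t. the active domains of `T`: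
non-null entries are kept, each null is replaced by an active domain value
(by the fresh symbol, encoded `none`, if the active domain is empty). -/
def spExt (T : Table α V) (t t' : Tuple α V) : Prop :=
  ∀ A, (t A ≠ none → t' A = t A) ∧
       (t A = none → if (VD T A).Nonempty then ∃ v ∈ VD T A, t' A = some v
                     else t' A = none)

/-- `T'` is a strongly possible world of `T`. -/
def spWorld (T T' : Table α V) : Prop := Multiset.Rel (spExt T) T T'

/-- Two tuples agree on the attribute set `X`. -/
def agrees (X : Finset α) (t1 t2 : Tuple α V) : Prop := ∀ A ∈ X, t1 A = t2 A

/-- Weak similarity on the attribute set `X`. -/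
def weakSim (X : Finset α) (t1 t2 : Tuple α V) : Prop :=
  ∀ A ∈ X, t1 A = t2 A ∨ t1 A = none ∨ t2 A = none

/-- `t` is `X`-total: no nulls among the attributes of `X`. -/
def isTotal (X : Finset α) (t : Tuple α V) : Prop := ∀ A ∈ X, t A ≠ none

instance (X : Finset α) : DecidablePred (isTotal (V := V) X) := fun t =>
  decidable_of_iff (∀ A ∈ X, t A ≠ none) Iff.rfl

/-- Projection of a tuple to the attribute set `X` (nulls outside `X`). -/
def proj (X : Finset α) (t : Tuple α V) : Tuple α V :=
  fun A => if A ∈ X then t A else none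

/-- A (complete) table satisfies the key `K`: tuple occurrences are pairwise distinct on `K`. -/
def keyOn (K : Finset α) (T' : Table α V) : Prop := (T'.map (proj K)).Nodup

/-- A (complete) table satisfies the functional dependency `X → Y`. -/
def FD (X Y : Finset α) (T' : Table α V) : Prop :=
  ∀ t1 ∈ T', ∀ t2 ∈ T', agrees X t1 t2 → agrees Y t1 t2

/-- A (complete) table over schema `R` satisfies the multivalued dependency `X ↠ Y`. -/
def MVD (R X Y : Finset α) (T' : Table α V) : Prop :=
  ∀ t1 ∈ T', ∀ t2 ∈ T', agrees X t1 t2 →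
    ∃ t ∈ T', agrees (X ∪ Y) t t1 ∧ agrees (X ∪ (R \ Y)) t t2

/-- A (complete) table satisfies the cross join `X × Y`. -/
def CJ (X Y : Finset α) (T' : Table α V) : Prop :=
  ∀ t1 ∈ T', ∀ t2 ∈ T', ∃ t ∈ T', agrees X t t1 ∧ agrees Y t t2

/-- `K` is a strongly possible key of `T`: `sp⟨K⟩`. -/
def spKey (T : Table α V) (K : Finset α) : Prop :=
  ∃ T', spWorld T T' ∧ keyOn K T'

/-- The strongly possible functional dependency `X →_sp Y` holds in `T`. -/
def spFD (T : Table α V) (X Y : Finset α) : Prop :=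
  ∃ T', spWorld T T' ∧ FD X Y T'

/-- The strongly possible multivalued dependency `X ↠_sp Y` holds in `T` over schema `R`. -/
def spMVD (R : Finset α) (T : Table α V) (X Y : Finset α) : Prop :=
  ∃ T', spWorld T T' ∧ MVD R X Y T'

/-- The strongly possible cross join `X ×_sp Y` holds in `T`. -/
def spCJ (T : Table α V) (X Y : Finset α) : Prop :=
  ∃ T', spWorld T T' ∧ CJ X Y T'

/-- Lien's null multivalued dependency `X ↠ Y` over schema `R`. -/
def NMVD (R : Finset α) (T : Table α V) (X Y : Finset α) : Prop :=
  ∀ t1 ∈ T, ∀ t2 ∈ T, isTotal X t1 → isTotal X t2 → agrees X t1 t2 →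
    ∃ t ∈ T, agrees (X ∪ Y) t t1 ∧ agrees (X ∪ (R \ Y)) t t2

/-- The minimum number of tuples whose removal from `T` makes `P` hold
(`T = T₀ + S` means that `S` is a submultiset of `T` and `T₀ = T ∖ S`). -/
noncomputable def g3Card (T : Table α V) (P : Table α V → Prop) : ℕ :=
  sInf {n : ℕ | ∃ T₀ S : Table α V, T = T₀ + S ∧ P T₀ ∧ Multiset.card S = n}

/-- `g3`: the minimum, over submultisets `S` of `T` whose removal makes the
constraint `P` hold, of `|S|/|T|`. -/
noncomputable def g3 (T : Table α V) (P : Table α V → Prop) : ℚ :=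
  (g3Card T P : ℚ) / (Multiset.card T : ℚ)

/-- The minimum number of tuples whose addition to `T` makes `P` hold. -/
noncomputable def g5Card (T : Table α V) (P : Table α V → Prop) : ℕ :=
  sInf {n : ℕ | ∃ S : Table α V, P (T + S) ∧ Multiset.card S = n}

/-- `g5`: the minimum, over finite multisets `S` of tuples whose addition makes
the constraint `P` hold, of `|S|/|T|`. -/
noncomputable def g5 (T : Table α V) (P : Table α V → Prop) : ℚ :=
  (g5Card T P : ℚ) / (Multiset.card T : ℚ)

end SPDB

/-!
A minimum-size removal can be turned into one of the same size that removes only non-`K`-total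
tuples. Take a strongly possible world of the kept part `T₀` witnessing the key, and a removed
`K`-total tuple `t`. The world lifts to `t ::ₘ T₀`: only columns where `T₀` has an empty active
domain change, and there every old tuple takes `t`'s value, so the old tuples stay pairwise
distinct on `K`. Either the `K`-projection of `t` is new, and `t` can be kept, or it collides with
exactly one lifted tuple `s`. Such an `s` is not `K`-total, because the `K`-total tuples of `T` are
already distinct on `K`; and `s` can be exchanged for `t`, since every value of `s` on `K` is a
value of `t`, so the active domains on `K` do not change. Each step lowers the number of removed
`K`-total tuples.
-/

namespace Multiset

variable {α β γ : Type*}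

theorem exists_rel_map_eq_iff {r : α → γ → Prop} {f : γ → β} {s : Multiset α}
    {t : Multiset β} :
    (∃ u, Rel r s u ∧ u.map f = t) ↔ Rel (fun a b => ∃ c, r a c ∧ f c = b) s t := by
  constructor
  · rintro ⟨u, hu, rfl⟩
    exact rel_map_right.2 (hu.mono fun _ _ c _ h => ⟨c, h, rfl⟩)
  · intro h
    induction h with
    | zero => exact ⟨0, Rel.zero, rfl⟩
    | cons hab _ ih =>
      obtain ⟨c, hc, rfl⟩ := hab
      obtain ⟨u, hu, rfl⟩ := ih
      exact ⟨c ::ₘ u, hu.cons hc, map_cons f c u⟩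

end Multiset

namespace SPDB

open Multiset

variable {α V : Type} [DecidableEq V] {T : Table α V} {s t w : Tuple α V} {A : α}

theorem mem_VD {v : V} : v ∈ VD T A ↔ ∃ u ∈ T, u A = some v := by
  simp [VD, mem_filterMap]

theorem mem_VD_cons {v : V} : v ∈ VD (t ::ₘ T) A ↔ t A = some v ∨ v ∈ VD T A := by
  simp [mem_VD]

theorem VD_cons_cons_of_imp (h : s A ≠ none → t A = s A) :
    VD (t ::ₘ s ::ₘ T) A = VD (t ::ₘ T) A := by
  ext v
  simp only [mem_VD_cons]
  constructor
  · rintro (hv | hv | hv)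
    exacts [Or.inl hv, Or.inl ((h (by simp [hv])).trans hv), Or.inr hv]
  · rintro (hv | hv)
    exacts [Or.inl hv, Or.inr (Or.inr hv)]

theorem eq_none_of_not_nonempty_VD (hs : s ∈ T) (h : ¬(VD T A).Nonempty) : s A = none :=
  Option.eq_none_iff_forall_ne_some.2 fun v hv => h ⟨v, mem_VD.2 ⟨s, hs, hv⟩⟩

theorem exists_spExt (T : Table α V) (t : Tuple α V) : ∃ t', spExt T t t' := by
  refine ⟨fun A => if h : (VD T A).Nonempty ∧ t A = none then some h.1.choose else t A,
    fun A => ⟨fun htA => dif_neg fun h => htA h.2, fun htA => ?_⟩⟩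
  split_ifs with hne
  · exact ⟨_, hne.choose_spec, dif_pos ⟨hne, htA⟩⟩
  · exact (dif_neg fun h => hne h.1).trans htA

def patch (T : Table α V) (x u : Tuple α V) : Tuple α V :=
  fun A => if (VD T A).Nonempty then u A else x A

theorem patch_injOn (T : Table α V) (x : Tuple α V) :
    Set.InjOn (patch T x) {w | ∀ A, ¬(VD T A).Nonempty → w A = none} := by
  intro w hw w' hw' h
  funext A
  by_cases hA : (VD T A).Nonempty
  · simpa [patch, hA] using congrFun h A
  · rw [hw A hA, hw' A hA]

theorem spExt_cons_patch {s' : Tuple α V} (hs : s ∈ T) (h : spExt T s s') :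
    spExt (t ::ₘ T) s (patch T t s') := by
  intro A
  by_cases hA : (VD T A).Nonempty
  · simp only [patch, if_pos hA]
    refine ⟨(h A).1, fun hsA => ?_⟩
    obtain ⟨v, hv, hv'⟩ : ∃ v ∈ VD T A, s' A = some v := by simpa [hA] using (h A).2 hsA
    have hv₁ : v ∈ VD (t ::ₘ T) A := mem_VD_cons.2 (Or.inr hv)
    rw [if_pos ⟨v, hv₁⟩]
    exact ⟨v, hv₁, hv'⟩
  · have hVD : ∀ v, v ∈ VD (t ::ₘ T) A ↔ t A = some v := fun v => by
      rw [mem_VD_cons]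
      exact or_iff_left fun hv => hA ⟨v, hv⟩
    simp only [patch, if_neg hA, eq_none_of_not_nonempty_VD hs hA]
    refine ⟨fun h => absurd rfl h, fun _ => ?_⟩
    by_cases hne : (VD (t ::ₘ T) A).Nonempty
    · obtain ⟨v, hv⟩ := hne
      rw [if_pos ⟨v, hv⟩]
      exact ⟨v, hv, (hVD v).1 hv⟩
    · rw [if_neg hne]
      exact Option.eq_none_iff_forall_ne_some.2 fun v hv => hne ⟨v, (hVD v).2 hv⟩

variable [DecidableEq α] {K : Finset α}

theorem proj_eq_of_spExt {t' : Tuple α V} (ht : isTotal K t) (h : spExt T t t') :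
    proj K t' = proj K t := by
  funext A
  unfold proj
  split_ifs with hA
  exacts [(h A).1 (ht A hA), rfl]

def spProj (K : Finset α) (T : Table α V) (t w : Tuple α V) : Prop :=
  ∃ t', spExt T t t' ∧ proj K t' = w

theorem spKey_iff : spKey T K ↔ ∃ W, Rel (spProj K T) T W ∧ W.Nodup := by
  constructor
  · rintro ⟨T', h, hnd⟩
    exact ⟨_, exists_rel_map_eq_iff.1 ⟨T', h, rfl⟩, hnd⟩
  · rintro ⟨W, h, hnd⟩
    obtain ⟨T', hT', rfl⟩ := exists_rel_map_eq_iff.2 h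
    exact ⟨T', hT', hnd⟩

namespace spProj

theorem of_isTotal (T : Table α V) (ht : isTotal K t) : spProj K T t (proj K t) :=
  let ⟨t', h⟩ := exists_spExt T t
  ⟨t', h, proj_eq_of_spExt ht h⟩

theorem eq_proj (h : spProj K T t w) (ht : isTotal K t) : w = proj K t := by
  obtain ⟨t', h, rfl⟩ := h
  exact proj_eq_of_spExt ht h

theorem apply_eq (h : spProj K T s w) (hA : A ∈ K) (hsA : s A ≠ none) : w A = s A := by
  obtain ⟨s', h, rfl⟩ := h
  simp [proj, hA, (h A).1 hsA]

theorem apply_eq_none (h : spProj K T s w) (hs : s ∈ T) (hA : ¬(VD T A).Nonempty) :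
    w A = none := by
  obtain ⟨s', h, rfl⟩ := h
  unfold proj
  split_ifs
  · simpa [hA] using (h A).2 (eq_none_of_not_nonempty_VD hs hA)
  · rfl

theorem of_VD_eq {T' : Table α V} (h : spProj K T s w) (hVD : ∀ A ∈ K, VD T A = VD T' A) :
    spProj K T' s w := by
  obtain ⟨s', h, rfl⟩ := h
  obtain ⟨s₀, h₀⟩ := exists_spExt T' s
  refine ⟨K.piecewise s' s₀, fun A => ?_, ?_⟩
  · by_cases hA : A ∈ K
    · rw [K.piecewise_eq_of_mem _ _ hA, ← hVD A hA]
      exact h A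
    · rw [K.piecewise_eq_of_notMem _ _ hA]
      exact h₀ A
  · funext A
    by_cases hA : A ∈ K <;> simp [proj, hA]

end spProj

theorem proj_patch {x u : Tuple α V} : proj K (patch T x u) = patch T (proj K x) (proj K u) := by
  funext A
  simp only [proj, patch]
  split_ifs <;> rfl

theorem spProj.patch (h : spProj K T s w) (hs : s ∈ T) :
    spProj K (t ::ₘ T) s (patch T (proj K t) w) := by
  obtain ⟨s', h, rfl⟩ := h
  exact ⟨SPDB.patch T t s', spExt_cons_patch hs h, proj_patch⟩

theorem rel_spProj_cons_patch {T₁ W : Table α V} (h : Rel (spProj K T) T₁ W) (hsub : T₁ ⊆ T) :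
    Rel (spProj K (t ::ₘ T)) T₁ (W.map (patch T (proj K t))) :=
  rel_map_right.2 (h.mono fun _ hs _ _ hw => hw.patch (hsub hs))

theorem nodup_map_patch {T₁ W : Table α V} (h : Rel (spProj K T) T₁ W) (hsub : T₁ ⊆ T)
    (hW : W.Nodup) (x : Tuple α V) : (W.map (patch T x)).Nodup := by
  have hdom : ∀ w ∈ W, ∀ A, ¬(VD T A).Nonempty → w A = none := fun w hw A hA =>
    let ⟨_, hs, hsw⟩ := exists_mem_of_rel_of_mem (rel_flip.2 h) hw
    spProj.apply_eq_none hsw (hsub hs) hA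
  exact hW.map_on fun w hw w' hw' => patch_injOn T x (hdom w hw) (hdom w' hw')

theorem nodup_map_proj_of_spKey (hT : ∀ u ∈ T, isTotal K u) (h : spKey T K) :
    (T.map (proj K)).Nodup := by
  obtain ⟨W, hrel, hW⟩ := spKey_iff.1 h
  rwa [rel_eq.1 (rel_map_left.2 (hrel.mono fun u hu _ _ h => (h.eq_proj (hT u hu)).symm))]

theorem spKey_cons_or_exchange (hkey : spKey T K) (ht : isTotal K t)
    (hdist : ∀ s ∈ T, isTotal K s → proj K s ≠ proj K t) :
    spKey (t ::ₘ T) K ∨ ∃ s T₁, T = s ::ₘ T₁ ∧ ¬isTotal K s ∧ spKey (t ::ₘ T₁) K := by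
  obtain ⟨W, hrel, hW⟩ := spKey_iff.1 hkey
  have hnd := nodup_map_patch hrel (Subset.refl T) hW (proj K t)
  by_cases hcol : proj K t ∈ W.map (patch T (proj K t))
  · right
    obtain ⟨w, hwW, hw⟩ := mem_map.1 hcol
    obtain ⟨W₁, rfl⟩ := exists_cons_of_mem hwW
    obtain ⟨s, T₁, hsw, hrel₁, rfl⟩ := rel_cons_right.1 hrel
    have hts : ∀ A ∈ K, s A ≠ none → t A = s A := fun A hA hsA => by
      obtain ⟨v, hv⟩ := Option.ne_none_iff_exists'.1 hsA
      have hne : (VD (s ::ₘ T₁) A).Nonempty := ⟨v, mem_VD_cons.2 (Or.inl hv)⟩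
      calc t A = proj K t A := by simp [proj, hA]
        _ = w A := by rw [← hw]; simp [patch, hne]
        _ = s A := hsw.apply_eq hA hsA
    refine ⟨s, T₁, rfl, fun hs => hdist s (mem_cons_self s T₁) hs ?_, ?_⟩
    · funext A
      by_cases hA : A ∈ K
      · simp [proj, hA, hts A hA (hs A hA)]
      · simp [proj, hA]
    -- the lifted world stays a key world for `t ::ₘ T₁`, with `t` taking over the entry of `s`
    · refine spKey_iff.2 ⟨proj K t ::ₘ W₁.map (patch (s ::ₘ T₁) (proj K t)), ?_, ?_⟩
      · exact ((rel_spProj_cons_patch hrel₁ (subset_cons T₁ s)).cons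
          (spProj.of_isTotal _ ht)).mono fun _ _ _ _ h =>
            h.of_VD_eq fun A hA => VD_cons_cons_of_imp (hts A hA)
      · rwa [map_cons, hw] at hnd
  · exact Or.inl (spKey_iff.2 ⟨_, (rel_spProj_cons_patch hrel (Subset.refl T)).cons
      (spProj.of_isTotal _ ht), nodup_cons.2 ⟨hcol, hnd⟩⟩)

theorem exists_removal_step {T₀ U : Table α V}
    (hTn : ((T.filter (isTotal K)).map (proj K)).Nodup) (hT : T = T₀ + U) (hkey : spKey T₀ K)
    (htU : t ∈ U) (ht : isTotal K t) :
    ∃ T₀' U' : Table α V, T = T₀' + U' ∧ spKey T₀' K ∧ card U' ≤ card U ∧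
      card (U'.filter (isTotal K)) < card (U.filter (isTotal K)) := by
  have hdist : ∀ s ∈ T₀, isTotal K s → proj K s ≠ proj K t := by
    rw [hT, filter_add, map_add, nodup_add] at hTn
    intro s hs hst heq
    exact disjoint_left.1 hTn.2.2 (mem_map_of_mem _ (mem_filter.2 ⟨hs, hst⟩))
      (heq ▸ mem_map_of_mem _ (mem_filter.2 ⟨htU, ht⟩))
  obtain ⟨U₁, rfl⟩ := exists_cons_of_mem htU
  rw [filter_cons_of_pos _ ht, card_cons, card_cons]
  rcases spKey_cons_or_exchange hkey ht hdist with hkey' | ⟨s, T₁, rfl, hs, hkey'⟩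
  · exact ⟨t ::ₘ T₀, U₁, by rw [hT, cons_add, add_cons], hkey', by omega, by omega⟩
  · refine ⟨t ::ₘ T₁, s ::ₘ U₁, by rw [hT, cons_add, cons_add, add_cons, add_cons, cons_swap],
      hkey', by rw [card_cons], by rw [filter_cons_of_neg _ hs]; omega⟩

theorem exists_nonTotal_removal {T₀ U : Table α V}
    (hTn : ((T.filter (isTotal K)).map (proj K)).Nodup) (hT : T = T₀ + U) (hkey : spKey T₀ K) :
    ∃ T₀' U' : Table α V, T = T₀' + U' ∧ spKey T₀' K ∧ card U' ≤ card U ∧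
      ∀ u ∈ U', ¬isTotal K u := by
  induction hn : card (U.filter (isTotal K)) using Nat.strong_induction_on
    generalizing T₀ U with
  | _ n ih =>
    by_cases hU : ∃ t ∈ U, isTotal K t
    · obtain ⟨t, htU, ht⟩ := hU
      obtain ⟨T₀', U', hT', hkey', hle, hlt⟩ := exists_removal_step hTn hT hkey htU ht
      obtain ⟨T₀'', U'', hT'', hkey'', hle', hnt⟩ := ih _ (hn ▸ hlt) hT' hkey' rfl
      exact ⟨T₀'', U'', hT'', hkey'', hle'.trans hle, hnt⟩
    · simp only [not_exists, not_and] at hU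
      exact ⟨T₀, U, hT, hkey, le_rfl, hU⟩

end SPDB

open SPDB in
theorem statement0_general {α V : Type} [DecidableEq α] [DecidableEq V]
    (K : Finset α) (T : Table α V)
    (htot : spKey (T.filter (isTotal K)) K) :
    ∃ T₀ U : Table α V, T = T₀ + U ∧ spKey T₀ K ∧
      (∀ t ∈ U, ¬ isTotal K t) ∧
      ∀ T₀' U' : Table α V, T = T₀' + U' → spKey T₀' K →
        Multiset.card U ≤ Multiset.card U' := by
  have hTn := nodup_map_proj_of_spKey (fun u hu => (Multiset.mem_filter.1 hu).2) htot
  have hfeasible : ∃ n, ∃ T₀ U : Table α V, T = T₀ + U ∧ spKey T₀ K ∧ Multiset.card U = n :=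
    ⟨_, _, _, (Multiset.filter_add_not (isTotal K) T).symm, htot, rfl⟩
  obtain ⟨T₀, U, hT, hkey, hmin⟩ := Nat.sInf_mem hfeasible
  obtain ⟨T₀', U', hT', hkey', hle, hnt⟩ := exists_nonTotal_removal hTn hT hkey
  refine ⟨T₀', U', hT', hkey', hnt, fun T₀'' U'' hT'' hkey'' => ?_⟩
  exact hle.trans (hmin ▸ Nat.sInf_le ⟨T₀'', U'', hT'', hkey'', rfl⟩)

open SPDB in
/-- if the `K`-total part of `T` satisfies `sp⟨K⟩`, then there is a
minimum-cardinality submultiset `U` of `T` (i.e. `T = T₀ + U`) whose removal makes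
`sp⟨K⟩` hold and all of whose tuples are non-`K`-total. -/
theorem statement0 {α V : Type} [DecidableEq α] [DecidableEq V]
    (R : Finset α) (K : Finset α) (hK : K ⊆ R) (T : Table α V)
    (htot : spKey (T.filter (isTotal K)) K) :
    ∃ T₀ U : Table α V, T = T₀ + U ∧ spKey T₀ K ∧
      (∀ t ∈ U, ¬ isTotal K t) ∧
      ∀ T₀' U' : Table α V, T = T₀' + U' → spKey T₀' K →
        Multiset.card U ≤ Multiset.card U' :=
  statement0_general K T htot
end

section
/- For every simple (finite, loopless, undirected) graph G = (V, E) with |V| = k, there exists an incomplete table T over a schema R of k attributes, consisting of k tuples t_1, …, t_k (one per vertex), such that for all i ≠ j the tuples t_i and t_j are weakly similar on R if and only if {v_i, v_j} ∈ E; that is, G is isomorphic to the weak similarity graph of R on T. -/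
open SPDB in
/-- every simple graph on `k` vertices is the weak similarity graph of a
table over a schema of `k` attributes with `k` tuples, one per vertex. -/
theorem statement7 (k : ℕ) (G : SimpleGraph (Fin k)) :
    ∃ ts : Fin k → Tuple (Fin k) ℕ,
      ∀ i j : Fin k, i ≠ j →
        (weakSim (Finset.univ : Finset (Fin k)) (ts i) (ts j) ↔ G.Adj i j) := by
  classical
  refine ⟨fun i A => if i = A then some 1 else if G.Adj i A then none else some 0, ?_⟩
  intro i j hij
  constructor
  · intro hws
    by_contra hadj
    have := hws i (Finset.mem_univ i)
    simp only [if_pos rfl] at this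
    have hji : j ≠ i := fun h => hij h.symm
    have : (some 1 : Option ℕ) = (if j = i then some 1 else if G.Adj j i then none else some 0)
        ∨ (some 1 : Option ℕ) = none
        ∨ (if j = i then some 1 else if G.Adj j i then none else some 0) = (none : Option ℕ) := this
    rw [if_neg hji, if_neg (fun h => hadj h.symm)] at this
    simp at this
  · intro hadj A _
    by_cases hiA : i = A
    · subst hiA
      have : G.Adj j i := hadj.symm
      simp [if_neg (Ne.symm hij), this]
    · by_cases hjA : j = A
      · subst hjA
        simp [hiA, hadj]
      · by_cases h1 : G.Adj i A <;> by_cases h2 : G.Adj j A <;>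
          simp [hiA, hjA, h1, h2]
end

section
/- There exists an incomplete table T over a schema R with attribute sets X, Y ⊆ R such that T satisfies Lien's null multivalued dependency (NMVD) X ↠ Y but T violates the strongly possible multivalued dependency X ↠_sp Y. -/
/-! Lien's NMVD only constrains `X`-total tuples, so a table whose column `0 ∈ X` is entirely
null satisfies every NMVD `X ↠ Y`. In a strongly possible world, however, that column is filled
with the fresh symbol throughout, so all tuples agree on `X = {0}` and the MVD `0 ↠ 1` demands the
tuples obtained by swapping the `2`-values. For the rows `(⊥, 1, 2)` and `(⊥, 2, 1)` the swapped
tuple `(s, 1, 1)` is missing from every world. -/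

namespace SPDB

theorem NMVD_of_column_null {α V : Type} [DecidableEq α] {R X Y : Finset α} {T : Table α V}
    {A : α} (hA : A ∈ X) (hnull : ∀ t ∈ T, t A = none) : NMVD R T X Y :=
  fun t₁ ht₁ _ _ htot₁ _ _ => (htot₁ A hA (hnull t₁ ht₁)).elim

theorem VD_eq_empty_of_column_null {α V : Type} [DecidableEq V] {T : Table α V} {A : α}
    (hnull : ∀ t ∈ T, t A = none) : VD T A = ∅ := by
  refine Finset.eq_empty_of_forall_notMem fun v hv => ?_
  obtain ⟨t, ht, htA⟩ := Multiset.mem_filterMap _ _ |>.mp (Multiset.mem_toFinset.mp hv)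
  simp [hnull t ht] at htA

theorem spExt.apply_of_ne_none {α V : Type} [DecidableEq V] {T : Table α V} {t t' : Tuple α V}
    (h : spExt T t t') {A : α} (hA : t A ≠ none) : t' A = t A :=
  (h A).1 hA

theorem spExt.apply_eq_none_of_column_null {α V : Type} [DecidableEq V] {T : Table α V}
    {t t' : Tuple α V} (h : spExt T t t') (ht : t ∈ T) {A : α}
    (hnull : ∀ s ∈ T, s A = none) : t' A = none := by
  have := (h A).2 (hnull t ht)
  rwa [VD_eq_empty_of_column_null hnull, if_neg Finset.not_nonempty_empty] at this

theorem spWorld_pair {α V : Type} [DecidableEq V] {a b : Tuple α V} {T' : Table α V}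
    (h : spWorld {a, b} T') :
    ∃ a' b', spExt {a, b} a a' ∧ spExt {a, b} b b' ∧ T' = {a', b'} := by
  obtain ⟨a', rest, ha, hrest, rfl⟩ := Multiset.rel_cons_left.mp h
  obtain ⟨b', nil, hb, hnil, rfl⟩ := Multiset.rel_cons_left.mp hrest
  obtain rfl := Multiset.rel_zero_left.mp hnil
  exact ⟨a', b', ha, hb, rfl⟩

theorem not_MVD_pair {α V : Type} [DecidableEq α] {R X Y : Finset α} {t₁ t₂ : Tuple α V}
    (hX : agrees X t₁ t₂) (hY : ¬ agrees (X ∪ Y) t₂ t₁) (hRY : ¬ agrees (X ∪ (R \ Y)) t₁ t₂) :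
    ¬ MVD R X Y {t₁, t₂} := by
  intro hmvd
  obtain ⟨t, ht, htY, htRY⟩ := hmvd t₁ (by simp) t₂ (by simp) hX
  rcases Multiset.mem_cons.mp ht with rfl | ht
  · exact hRY htRY
  · obtain rfl := Multiset.mem_singleton.mp ht
    exact hY htY

def nullRow (x y : ℕ) : Tuple ℕ ℕ
  | 1 => some x
  | 2 => some y
  | _ => none

theorem nullRows_column_zero : ∀ t ∈ ({nullRow 1 2, nullRow 2 1} : Table ℕ ℕ), t 0 = none := by
  simp [nullRow]

theorem not_spMVD_nullRows :
    ¬ spMVD {0, 1, 2} ({nullRow 1 2, nullRow 2 1} : Table ℕ ℕ) {0} {1} := by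
  rintro ⟨T', hworld, hmvd⟩
  obtain ⟨a, b, ha, hb, rfl⟩ := spWorld_pair hworld
  have hX : agrees {0} a b := by
    simp only [agrees, Finset.mem_singleton, forall_eq]
    rw [ha.apply_eq_none_of_column_null (by simp) nullRows_column_zero,
      hb.apply_eq_none_of_column_null (by simp) nullRows_column_zero]
  have ha₁ : a 1 = some 1 := ha.apply_of_ne_none (by simp [nullRow])
  have ha₂ : a 2 = some 2 := ha.apply_of_ne_none (by simp [nullRow])
  have hb₁ : b 1 = some 2 := hb.apply_of_ne_none (by simp [nullRow])
  have hb₂ : b 2 = some 1 := hb.apply_of_ne_none (by simp [nullRow])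
  refine not_MVD_pair hX (fun h => ?_) (fun h => ?_) hmvd
  · simpa [ha₁, hb₁] using h 1 (by simp)
  · simpa [ha₂, hb₂] using h 2 (by simp)

end SPDB

open SPDB in
/-- there is a table satisfying Lien's NMVD `X ↠ Y` but violating the
spMVD `X ↠_sp Y`. -/
theorem statement14 :
    ∃ (R X Y : Finset ℕ) (T : Table ℕ ℕ), X ⊆ R ∧ Y ⊆ R ∧
      NMVD R T X Y ∧ ¬ spMVD R T X Y :=
  ⟨{0, 1, 2}, {0}, {1}, {nullRow 1 2, nullRow 2 1}, by decide, by decide,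
    NMVD_of_column_null (Finset.mem_singleton_self 0) nullRows_column_zero, not_spMVD_nullRows⟩
end

section
/- The measures g3 and g5 are independent of each other for strongly possible cross joins: there exist an incomplete table T1 with attribute sets X1, Y1 such that g3(X1 ×_sp Y1) > g5(X1 ×_sp Y1), and an incomplete table T2 with attribute sets X2, Y2 such that g3(X2 ×_sp Y2) < g5(X2 ×_sp Y2). -/
/-
Take X = {0} and Y = {1}. A strongly possible extension keeps non-null values, so a tuple
that is non-null and equal on 0 and 1 ("diagonal") stays diagonal; hence a world has at most
as many off-diagonal tuples as the table. If the table contains (1,1) and (2,2), every world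
satisfying X × Y contains the two distinct off-diagonal tuples (1,2) and (2,1), so a table
with at most one off-diagonal tuple violates X ×_sp Y.

For T₁ = {(⊥,⊥), (1,1), (1,1), (2,2), (2,2)}, adding (1,2) and filling ⊥ with (2,1) repairs
the cross join, while removing a single tuple leaves (1,1), (2,2) and only (⊥,⊥) off the
diagonal: g5 ≤ 1/5 < 2/5 ≤ g3. For T₂ = {(1,1), (2,2)}, removing one tuple repairs it,
while adding a single tuple leaves only that one off the diagonal: g3 ≤ 1/2 < 1 ≤ g5.
-/

namespace Multiset

variable {α β : Type*}

theorem Rel.countP_le {r : α → β → Prop} {p : α → Prop} {q : β → Prop}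
    [DecidablePred p] [DecidablePred q] (hpq : ∀ a b, r a b → q b → p a)
    {s : Multiset α} {t : Multiset β} (h : Rel r s t) : t.countP q ≤ s.countP p := by
  induction h with
  | zero => simp
  | @cons a b _ _ hab _ ih =>
    rw [countP_cons, countP_cons]
    have := hpq a b hab
    split_ifs <;> grind

theorem two_le_countP {p : α → Prop} [DecidablePred p] {s : Multiset α} {a b : α}
    (ha : a ∈ s) (hb : b ∈ s) (hab : a ≠ b) (hpa : p a) (hpb : p b) : 2 ≤ s.countP p := by
  rw [countP_eq_card_filter, ← card_pair a b]
  refine card_le_card ((le_iff_subset (by simpa using hab)).2 ?_)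
  simp [cons_subset, *]

theorem mem_of_replicate_le_add {s t : Multiset α} {a : α} {n : ℕ} (hn : card t < n)
    (h : replicate n a ≤ s + t) : a ∈ s := by
  classical
  by_contra has
  rw [le_count_iff_replicate_le.symm, count_add, count_eq_zero.2 has, zero_add] at h
  exact absurd (h.trans (count_le_card a t)) hn.not_ge

end Multiset

namespace SPDB

variable {α V : Type}

theorem agrees_singleton {A : α} {t₁ t₂ : Tuple α V} : agrees {A} t₁ t₂ ↔ t₁ A = t₂ A := by
  simp [agrees]

theorem CJ_singleton_iff {A B : α} {T : Table α V} :
    CJ {A} {B} T ↔ ∀ t₁ ∈ T, ∀ t₂ ∈ T, ∃ t ∈ T, t A = t₁ A ∧ t B = t₂ B := by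
  simp only [CJ, agrees_singleton]

theorem CJ_replicate (X Y : Finset α) (n : ℕ) (t : Tuple α V) :
    CJ X Y (Multiset.replicate n t) := by
  intro t₁ h₁ t₂ h₂
  refine ⟨t₁, h₁, fun _ _ => rfl, fun _ _ => ?_⟩
  rw [Multiset.eq_of_mem_replicate h₁, Multiset.eq_of_mem_replicate h₂]

section Measures

variable {T : Table α V} {P : Table α V → Prop}

theorem g3Card_le {T₀ S : Table α V} (h : T = T₀ + S) (hP : P T₀) :
    g3Card T P ≤ Multiset.card S :=
  Nat.sInf_le ⟨T₀, S, h, hP, rfl⟩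

theorem le_g3Card {n : ℕ} (hP : ∃ T₀ S, T = T₀ + S ∧ P T₀)
    (h : ∀ T₀ S, T = T₀ + S → P T₀ → n ≤ Multiset.card S) : n ≤ g3Card T P := by
  obtain ⟨T₀, S, hT, hP⟩ := hP
  exact le_csInf ⟨_, T₀, S, hT, hP, rfl⟩ fun _ ⟨T₀, S, hT, hP, hm⟩ => hm ▸ h T₀ S hT hP

theorem g5Card_le {S : Table α V} (hP : P (T + S)) : g5Card T P ≤ Multiset.card S :=
  Nat.sInf_le ⟨S, hP, rfl⟩

theorem le_g5Card {n : ℕ} (hP : ∃ S, P (T + S)) (h : ∀ S, P (T + S) → n ≤ Multiset.card S) :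
    n ≤ g5Card T P := by
  obtain ⟨S, hP⟩ := hP
  exact le_csInf ⟨_, S, hP, rfl⟩ fun _ ⟨S, hP, hm⟩ => hm ▸ h S hP

theorem g3_lt_g5_iff (hT : T ≠ 0) : g3 T P < g5 T P ↔ g3Card T P < g5Card T P := by
  rw [g3, g5, div_lt_div_iff_of_pos_right (by exact_mod_cast Multiset.card_pos.2 hT)]
  exact Nat.cast_lt

theorem g5_lt_g3_iff (hT : T ≠ 0) : g5 T P < g3 T P ↔ g5Card T P < g3Card T P := by
  rw [g3, g5, div_lt_div_iff_of_pos_right (by exact_mod_cast Multiset.card_pos.2 hT)]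
  exact Nat.cast_lt

end Measures

section StronglyPossibleWorlds

variable [DecidableEq V] {T T' : Table α V} {t t' : Tuple α V}

theorem spExt_self (ht : ∀ A, t A ≠ none) : spExt T t t :=
  fun A => ⟨fun _ => rfl, fun hA => absurd hA (ht A)⟩

theorem spExt.apply_eq_some (h : spExt T t t') {A : α} {v : V} (hA : t A = some v) :
    t' A = some v :=
  ((h A).1 (by simp [hA])).trans hA

theorem spExt_of_forall_exists (h : ∀ A, ∃ u ∈ T, ∃ v, u A = some v ∧ t' A = some v) :
    spExt T (fun _ => none) t' := by
  intro A
  obtain ⟨u, hu, v, huv, hv⟩ := h A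
  have hvD : v ∈ VD T A := by
    rw [VD, Multiset.mem_toFinset, Multiset.mem_filterMap]
    exact ⟨u, hu, huv⟩
  exact ⟨fun h => absurd rfl h, fun _ => by rw [if_pos ⟨v, hvD⟩]; exact ⟨v, hvD, hv⟩⟩

theorem spWorld_cons {s : Table α V} (ht : spExt (t ::ₘ s) t t')
    (hs : ∀ u ∈ s, ∀ A, u A ≠ none) : spWorld (t ::ₘ s) (t' ::ₘ s) :=
  Multiset.Rel.cons ht (Multiset.rel_refl_of_refl_on fun u hu => spExt_self (hs u hu))

theorem spWorld_self (hT : ∀ u ∈ T, ∀ A, u A ≠ none) : spWorld T T :=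
  Multiset.rel_refl_of_refl_on fun u hu => spExt_self (hT u hu)

def isDiagonal (A B : α) (t : Tuple α V) : Prop := t A ≠ none ∧ t A = t B

instance (A B : α) : DecidablePred (isDiagonal (V := V) A B) := fun t =>
  decidable_of_iff (t A ≠ none ∧ t A = t B) Iff.rfl

variable {A B : α}

theorem spExt.isDiagonal (h : spExt T t t') (ht : isDiagonal A B t) : isDiagonal A B t' := by
  obtain ⟨hA, hAB⟩ := ht
  have hB : t B ≠ none := hAB ▸ hA
  rw [SPDB.isDiagonal, (h A).1 hA, (h B).1 hB]
  exact ⟨hA, hAB⟩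

theorem spWorld.countP_not_isDiagonal_le (h : spWorld T T') :
    T'.countP (¬ isDiagonal A B ·) ≤ T.countP (¬ isDiagonal A B ·) :=
  Multiset.Rel.countP_le (fun _ _ hext hnd hd => hnd (hext.isDiagonal hd)) h

theorem not_spCJ_of_countP_not_isDiagonal_le_one {a b : V} (hab : a ≠ b)
    (ha : ∃ t ∈ T, t A = some a ∧ t B = some a) (hb : ∃ t ∈ T, t A = some b ∧ t B = some b)
    (hT : T.countP (¬ isDiagonal A B ·) ≤ 1) : ¬ spCJ T {A} {B} := by
  rintro ⟨T', hT', hcj⟩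
  rw [CJ_singleton_iff] at hcj
  obtain ⟨ta, hta, htaA, htaB⟩ := ha
  obtain ⟨tb, htb, htbA, htbB⟩ := hb
  obtain ⟨ta', hta', hexta⟩ := Multiset.exists_mem_of_rel_of_mem hT' hta
  obtain ⟨tb', htb', hextb⟩ := Multiset.exists_mem_of_rel_of_mem hT' htb
  obtain ⟨u, hu, huA, huB⟩ := hcj ta' hta' tb' htb'
  obtain ⟨v, hv, hvA, hvB⟩ := hcj tb' htb' ta' hta'
  rw [hexta.apply_eq_some htaA] at huA
  rw [hextb.apply_eq_some htbB] at huB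
  rw [hextb.apply_eq_some htbA] at hvA
  rw [hexta.apply_eq_some htaB] at hvB
  have huv : u ≠ v := fun h => hab (Option.some_injective _ (huA.symm.trans (h ▸ hvA)))
  have hoff : 2 ≤ T'.countP (¬ isDiagonal A B ·) :=
    Multiset.two_le_countP hu hv huv (by simp [SPDB.isDiagonal, huA, huB, hab])
      (by simp [SPDB.isDiagonal, hvA, hvB, hab.symm])
  have := hT'.countP_not_isDiagonal_le (A := A) (B := B)
  omega

end StronglyPossibleWorlds

section Examples

def pair (a b : ℕ) : Tuple ℕ ℕ := fun A => if A = 0 then some a else some b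

def null : Tuple ℕ ℕ := fun _ => none

@[simp]
theorem pair_ne_none (a b : ℕ) (A : ℕ) : pair a b A ≠ none := by
  unfold pair; split_ifs <;> simp

def T₁ : Table ℕ ℕ :=
  null ::ₘ (Multiset.replicate 2 (pair 1 1) + Multiset.replicate 2 (pair 2 2))

def T₂ : Table ℕ ℕ := {pair 1 1, pair 2 2}

theorem not_spCJ_of_pair_mem {T : Table ℕ ℕ} (h₁ : pair 1 1 ∈ T) (h₂ : pair 2 2 ∈ T)
    (hT : T.countP (¬ isDiagonal 0 1 ·) ≤ 1) : ¬ spCJ T {0} {1} :=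
  not_spCJ_of_countP_not_isDiagonal_le_one (by decide : (1 : ℕ) ≠ 2)
    ⟨_, h₁, rfl, rfl⟩ ⟨_, h₂, rfl, rfl⟩ hT

theorem g5Card_T₁_le : g5Card T₁ (fun U => spCJ U {0} {1}) ≤ 1 := by
  refine g5Card_le (S := {pair 1 2}) ?_
  rw [T₁, Multiset.cons_add]
  refine ⟨pair 2 1 ::ₘ _, spWorld_cons ?_ ?_, ?_⟩
  · refine spExt_of_forall_exists fun A => ?_
    by_cases hA : A = 0
    · exact ⟨pair 2 2, by simp, 2, by simp [pair, hA]⟩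
    · exact ⟨pair 1 1, by simp, 1, by simp [pair, hA]⟩
  · simp
  · simp [CJ_singleton_iff, pair]

theorem two_le_g3Card_T₁ : 2 ≤ g3Card T₁ (fun U => spCJ U {0} {1}) := by
  refine le_g3Card ⟨null ::ₘ Multiset.replicate 2 (pair 2 2), Multiset.replicate 2 (pair 1 1),
    by simp [T₁, add_comm], Multiset.replicate 3 (pair 2 2), spWorld_cons ?_ ?_,
    CJ_replicate _ _ _ _⟩ ?_
  · exact spExt_of_forall_exists fun A => ⟨pair 2 2, by simp, 2, by simp [pair]⟩
  · simp
  · intro T₀ S hT hP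
    by_contra! hS
    have hle : T₀ ≤ T₁ := hT ▸ Multiset.le_add_right _ _
    refine not_spCJ_of_pair_mem ?_ ?_ ?_ hP
    · refine Multiset.mem_of_replicate_le_add hS (hT ▸ ?_)
      exact (Multiset.le_add_right _ _).trans (Multiset.le_cons_self _ _)
    · refine Multiset.mem_of_replicate_le_add hS (hT ▸ ?_)
      exact (Multiset.le_add_left _ _).trans (Multiset.le_cons_self _ _)
    · exact (Multiset.countP_le_of_le _ hle).trans (by decide)

theorem g3Card_T₂_le : g3Card T₂ (fun U => spCJ U {0} {1}) ≤ 1 :=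
  g3Card_le (T₀ := {pair 1 1}) (S := {pair 2 2}) rfl
    ⟨_, spWorld_self (by simp), CJ_replicate _ _ 1 _⟩

theorem two_le_g5Card_T₂ : 2 ≤ g5Card T₂ (fun U => spCJ U {0} {1}) := by
  refine le_g5Card ⟨{pair 1 2, pair 2 1}, _, spWorld_self ?_, ?_⟩ fun S hP => ?_
  · simp [T₂]
  · simp [T₂, CJ_singleton_iff, pair]
  · by_contra! hS
    refine not_spCJ_of_pair_mem (by simp [T₂]) (by simp [T₂]) ?_ hP
    rw [Multiset.countP_add, (by decide : T₂.countP (¬ isDiagonal 0 1 ·) = 0), zero_add]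
    exact (Multiset.countP_le_card _ _).trans (Nat.le_of_lt_succ hS)

end Examples

end SPDB

open SPDB in
/-- `g3` and `g5` are independent for spCJs: there are a table with
`g3(X ×_sp Y) > g5(X ×_sp Y)` and a table with `g3(X ×_sp Y) < g5(X ×_sp Y)`. -/
theorem statement16 :
    (∃ (X1 Y1 : Finset ℕ) (T1 : Table ℕ ℕ),
      g5 T1 (fun U => spCJ U X1 Y1) < g3 T1 (fun U => spCJ U X1 Y1)) ∧
    (∃ (X2 Y2 : Finset ℕ) (T2 : Table ℕ ℕ),
      g3 T2 (fun U => spCJ U X2 Y2) < g5 T2 (fun U => spCJ U X2 Y2)) :=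
  ⟨⟨{0}, {1}, T₁, (g5_lt_g3_iff (by simp [T₁])).2 (g5Card_T₁_le.trans_lt two_le_g3Card_T₁)⟩,
    ⟨{0}, {1}, T₂, (g3_lt_g5_iff (by simp [T₂])).2 (g3Card_T₂_le.trans_lt two_le_g5Card_T₂)⟩⟩
end
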